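/- Let L, M, Z be nonempty finite sets, F a two-universal family of hash functions from L to M with |f⁻¹(m)| = |L|/|M| for all f ∈ F and m ∈ M, Q : L → (Z → ℝ>0) a strictly positive conditional probability kernel, and let the random variable L be uniform on L and Z be generated from L via Q. Then for all 0 < s ≤ 1/2: I(F(L); Z | F) ≤ (|M|^s / (|L|^s · s)) · exp(φ̄(s, Q)), where φ̄(s, Q) = ln Σ_{z∈Z} ( (1/|L|) Σ_{ℓ∈L} Q(z|ℓ)^{1/(1-s)} )^{1-s}, F is uniform on F, and I(F(L); Z | F) = E_F I(f(L); Z) is the conditional mutual information. -/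

import Mathlib

/-!
Bound the relative entropy by a Rényi-type quantity: `log x ≤ (x ^ s - 1) / s` gives
`D(P ‖ R) ≤ (∑ P ^ (1 + s) / R ^ s - 1) / s`. In the hashed joint distribution the fibre of
`f` through `ℓ` carries the mass of `ℓ` plus the mass colliding with `ℓ`, and subadditivity
of `x ↦ x ^ s` separates the two. Averaged over `F`, concavity of `x ↦ x ^ s` and
two-universality bound the collision term by `(P_Z z / |M|) ^ s`, which cancels the `- 1`;
Hölder's inequality with exponents `1 / s`, `1 / (1 - s)` turns the remaining diagonal term
into the Gallager function.
-/

open Finset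

lemma Real.log_le_rpow_sub_one_div {x s : ℝ} (hx : 0 < x) (hs : 0 < s) :
    Real.log x ≤ (x ^ s - 1) / s := by
  rw [le_div_iff₀ hs, mul_comm, ← Real.log_rpow hx]
  exact Real.log_le_sub_one_of_pos (Real.rpow_pos_of_pos hx s)

lemma Real.mul_log_div_le {p r s : ℝ} (hp : 0 ≤ p) (hr : 0 < r) (hs : 0 < s) :
    p * Real.log (p / r) ≤ (p ^ (1 + s) / r ^ s - p) / s := by
  rcases hp.eq_or_lt with rfl | hp
  · simp [Real.zero_rpow (by linarith : 1 + s ≠ 0)]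
  calc p * Real.log (p / r) ≤ p * (((p / r) ^ s - 1) / s) :=
        mul_le_mul_of_nonneg_left (Real.log_le_rpow_sub_one_div (div_pos hp hr) hs) hp.le
    _ = _ := by rw [Real.div_rpow hp.le hr.le, Real.rpow_one_add' hp.le (by linarith)]; ring

lemma Real.sum_mul_log_div_le {ι : Type*} [Fintype ι] {p r : ι → ℝ} (hp : ∀ i, 0 ≤ p i)
    (hr : ∀ i, 0 < r i) (hp1 : ∑ i, p i = 1) {s : ℝ} (hs : 0 < s) :
    ∑ i, p i * Real.log (p i / r i) ≤ (∑ i, p i ^ (1 + s) / r i ^ s - 1) / s :=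
  calc _ ≤ ∑ i, (p i ^ (1 + s) / r i ^ s - p i) / s :=
        sum_le_sum fun i _ => Real.mul_log_div_le (hp i) (hr i) hs
    _ = _ := by rw [← sum_div, sum_sub_distrib, hp1]

lemma Real.sum_mul_rpow_one_add_le {ι : Type*} [Fintype ι] {w g : ι → ℝ}
    (hw : ∀ i, 0 ≤ w i) (hg : ∀ i, 0 ≤ g i) {s : ℝ} (hs0 : 0 ≤ s) (hs1 : s < 1) :
    ∑ i, w i * g i ^ (1 + s) ≤
      (∑ i, w i * g i) ^ s * (∑ i, w i * g i ^ (1 / (1 - s))) ^ (1 - s) := by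
  -- weighted Hölder with weights `w i * g i`, applied to `g i ^ s` at exponent `1 / (1 - s)`
  have h1s : 0 < 1 - s := by linarith
  have hp : 1 ≤ 1 / (1 - s) := by rw [le_div_iff₀ h1s]; linarith
  have key := Real.inner_le_weight_mul_Lp_of_nonneg univ hp (fun i => w i * g i)
    (fun i => g i ^ s) (fun i => mul_nonneg (hw i) (hg i)) (fun i => Real.rpow_nonneg (hg i) s)
  rw [one_div, inv_inv, sub_sub_cancel] at key
  have hexp : 1 + s * (1 - s)⁻¹ = (1 - s)⁻¹ := by field_simp; ring
  calc ∑ i, w i * g i ^ (1 + s) = ∑ i, w i * g i * g i ^ s := by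
        simp only [Real.rpow_one_add' (hg _) (by linarith : 1 + s ≠ 0), mul_assoc]
    _ ≤ _ := key
    _ = _ := by
        simp only [one_div, ← Real.rpow_mul (hg _), mul_assoc,
          ← Real.rpow_one_add' (hg _) (by positivity : 1 + s * (1 - s)⁻¹ ≠ 0), hexp]

section TwoUniversal

variable {L M : Type*} [Fintype L] [DecidableEq M]

def IsTwoUniversal [Fintype M] (F : Finset (L → M)) : Prop :=
  ∀ x₁ x₂ : L, x₁ ≠ x₂ → (#(F.filter fun f => f x₁ = f x₂) : ℝ) / #F ≤ 1 / Fintype.card M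

def collisionMass [DecidableEq L] (f : L → M) (a : L → ℝ) (ℓ : L) : ℝ :=
  ∑ ℓ' ∈ univ.erase ℓ with f ℓ' = f ℓ, a ℓ'

lemma collisionMass_nonneg [DecidableEq L] (f : L → M) {a : L → ℝ} (ha : ∀ ℓ, 0 ≤ a ℓ)
    (ℓ : L) : 0 ≤ collisionMass f a ℓ :=
  sum_nonneg fun ℓ' _ => ha ℓ'

lemma sum_filter_eq_add_collisionMass [DecidableEq L] (f : L → M) (a : L → ℝ) (ℓ : L) :
    ∑ ℓ' with f ℓ' = f ℓ, a ℓ' = a ℓ + collisionMass f a ℓ := by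
  rw [collisionMass, filter_erase, add_sum_erase _ _ (by simp)]

lemma sum_fiber_rpow_one_add_le [Fintype M] [DecidableEq L] (f : L → M) {a : L → ℝ}
    (ha : ∀ ℓ, 0 ≤ a ℓ) {s : ℝ} (hs0 : 0 ≤ s) (hs1 : s ≤ 1) :
    ∑ m, (∑ ℓ with f ℓ = m, a ℓ) ^ (1 + s) ≤
      ∑ ℓ, a ℓ * (a ℓ ^ s + collisionMass f a ℓ ^ s) := by
  calc ∑ m, (∑ ℓ with f ℓ = m, a ℓ) ^ (1 + s)
      = ∑ m, ∑ ℓ with f ℓ = m, a ℓ * (∑ ℓ' with f ℓ' = f ℓ, a ℓ') ^ s := by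
        refine sum_congr rfl fun m _ => ?_
        rw [Real.rpow_one_add' (sum_nonneg fun ℓ _ => ha ℓ) (by linarith), sum_mul]
        exact sum_congr rfl fun ℓ hℓ => by rw [(mem_filter.mp hℓ).2]
    _ = ∑ ℓ, a ℓ * (a ℓ + collisionMass f a ℓ) ^ s := by
        simp only [sum_fiberwise, sum_filter_eq_add_collisionMass]
    _ ≤ _ := by
        gcongr with ℓ
        · exact ha ℓ
        · exact Real.rpow_add_le_add_rpow (ha ℓ) (collisionMass_nonneg f ha ℓ) hs0 hs1

lemma IsTwoUniversal.avg_collisionMass_le [Fintype M] [DecidableEq L] {F : Finset (L → M)}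
    (hF : IsTwoUniversal F) {a : L → ℝ} (ha : ∀ ℓ, 0 ≤ a ℓ) (ℓ : L) :
    (1 / #F : ℝ) * ∑ f ∈ F, collisionMass f a ℓ ≤ (∑ ℓ', a ℓ') / Fintype.card M := by
  have hswap : ∑ f ∈ F, collisionMass f a ℓ =
      ∑ ℓ' ∈ univ.erase ℓ, (#(F.filter fun f => f ℓ' = f ℓ) : ℝ) * a ℓ' := by
    simp only [collisionMass, sum_filter]
    rw [sum_comm]
    exact sum_congr rfl fun ℓ' _ => by rw [← sum_filter, sum_const, nsmul_eq_mul]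
  calc (1 / #F : ℝ) * ∑ f ∈ F, collisionMass f a ℓ
      = ∑ ℓ' ∈ univ.erase ℓ, (#(F.filter fun f => f ℓ' = f ℓ) : ℝ) / #F * a ℓ' := by
        rw [hswap, mul_sum]
        exact sum_congr rfl fun _ _ => by ring
    _ ≤ ∑ ℓ' ∈ univ.erase ℓ, 1 / Fintype.card M * a ℓ' :=
        sum_le_sum fun ℓ' hℓ' =>
          mul_le_mul_of_nonneg_right (hF ℓ' ℓ (ne_of_mem_erase hℓ')) (ha ℓ')
    _ ≤ ∑ ℓ', 1 / Fintype.card M * a ℓ' :=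
        sum_le_sum_of_subset_of_nonneg (erase_subset _ _) fun ℓ' _ _ =>
          mul_nonneg (by positivity) (ha ℓ')
    _ = (∑ ℓ', a ℓ') / Fintype.card M := by rw [← mul_sum]; ring

lemma IsTwoUniversal.avg_sum_fiber_rpow_one_add_le [Fintype M] {F : Finset (L → M)}
    (hF : IsTwoUniversal F) (hFne : F.Nonempty) {a : L → ℝ} (ha : ∀ ℓ, 0 ≤ a ℓ) {s : ℝ}
    (hs0 : 0 ≤ s) (hs1 : s ≤ 1) :
    (1 / #F : ℝ) * ∑ f ∈ F, ∑ m, (∑ ℓ with f ℓ = m, a ℓ) ^ (1 + s) ≤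
      ∑ ℓ, a ℓ ^ (1 + s) + (∑ ℓ, a ℓ) ^ (1 + s) / (Fintype.card M : ℝ) ^ s := by
  classical
  have hF0 : (0 : ℝ) < #F := by exact_mod_cast hFne.card_pos
  have hjensen : ∀ ℓ, (1 / #F : ℝ) * ∑ f ∈ F, collisionMass f a ℓ ^ s ≤
      ((∑ ℓ', a ℓ') / Fintype.card M) ^ s := by
    intro ℓ
    calc (1 / #F : ℝ) * ∑ f ∈ F, collisionMass f a ℓ ^ s
        ≤ ((1 / #F : ℝ) * ∑ f ∈ F, collisionMass f a ℓ) ^ s := by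
          simpa only [mul_sum, smul_eq_mul] using (Real.concaveOn_rpow hs0 hs1).le_map_sum
            (t := F) (w := fun _ => (1 / #F : ℝ)) (p := fun f => collisionMass f a ℓ)
            (fun _ _ => by positivity) (by rw [sum_const, nsmul_eq_mul]; field_simp)
            (fun f _ => collisionMass_nonneg f ha ℓ)
      _ ≤ _ := Real.rpow_le_rpow
          (mul_nonneg (by positivity) (sum_nonneg fun f _ => collisionMass_nonneg f ha ℓ))
          (hF.avg_collisionMass_le ha ℓ) hs0
  calc (1 / #F : ℝ) * ∑ f ∈ F, ∑ m, (∑ ℓ with f ℓ = m, a ℓ) ^ (1 + s)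
      ≤ (1 / #F : ℝ) * ∑ f ∈ F, ∑ ℓ, a ℓ * (a ℓ ^ s + collisionMass f a ℓ ^ s) := by
        gcongr with f
        exact sum_fiber_rpow_one_add_le f ha hs0 hs1
    _ = ∑ ℓ, a ℓ ^ (1 + s) +
          ∑ ℓ, a ℓ * ((1 / #F : ℝ) * ∑ f ∈ F, collisionMass f a ℓ ^ s) := by
        simp only [mul_add, sum_add_distrib, sum_const, nsmul_eq_mul, mul_sum]
        rw [sum_comm]
        congr 1
        · refine sum_congr rfl fun ℓ _ => ?_
          rw [Real.rpow_one_add' (ha ℓ) (by linarith)]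
          field_simp
        · exact sum_congr rfl fun _ _ => sum_congr rfl fun _ _ => by ring
    _ ≤ ∑ ℓ, a ℓ ^ (1 + s) + ∑ ℓ, a ℓ * ((∑ ℓ', a ℓ') / Fintype.card M) ^ s := by
        gcongr with ℓ
        · exact ha ℓ
        · exact hjensen ℓ
    _ = _ := by
        rw [← sum_mul, Real.div_rpow (sum_nonneg fun ℓ _ => ha ℓ) (Nat.cast_nonneg _),
          Real.rpow_one_add' (sum_nonneg fun ℓ _ => ha ℓ) (by linarith), mul_div_assoc]

end TwoUniversal

section HashedChannel

variable {L M Z : Type*} [Fintype L]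

noncomputable def outputMarginal (Q : L → Z → ℝ) (z : Z) : ℝ :=
  (1 / Fintype.card L : ℝ) * ∑ ℓ : L, Q ℓ z

lemma outputMarginal_pos [Nonempty L] {Q : L → Z → ℝ} (hQ : ∀ ℓ z, 0 < Q ℓ z) (z : Z) :
    0 < outputMarginal Q z :=
  mul_pos (by positivity) (sum_pos (fun ℓ _ => hQ ℓ z) univ_nonempty)

lemma sum_outputMarginal [Fintype Z] [Nonempty L] {Q : L → Z → ℝ}
    (hQ : ∀ ℓ, ∑ z, Q ℓ z = 1) : ∑ z, outputMarginal Q z = 1 := by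
  simp only [outputMarginal, ← mul_sum]
  rw [sum_comm]
  simp [hQ]

variable [DecidableEq M]

noncomputable def hashedJoint (Q : L → Z → ℝ) (f : L → M) (m : M) (z : Z) : ℝ :=
  (1 / Fintype.card L : ℝ) * ∑ ℓ ∈ univ.filter (fun ℓ : L => f ℓ = m), Q ℓ z

lemma sum_hashedJoint [Fintype M] [Fintype Z] [Nonempty L] {Q : L → Z → ℝ}
    (hQ : ∀ ℓ, ∑ z, Q ℓ z = 1) (f : L → M) : ∑ m, ∑ z, hashedJoint Q f m z = 1 := by
  rw [sum_comm, ← sum_outputMarginal hQ]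
  simp only [hashedJoint, outputMarginal, ← mul_sum, sum_fiberwise]

lemma sum_hashedJoint_mul_log_le [Fintype M] [Fintype Z] [Nonempty L] [Nonempty M]
    {Q : L → Z → ℝ} (hQpos : ∀ ℓ z, 0 < Q ℓ z) (hQsum : ∀ ℓ, ∑ z, Q ℓ z = 1) (f : L → M)
    {s : ℝ} (hs : 0 < s) :
    ∑ m, ∑ z, hashedJoint Q f m z *
        Real.log (hashedJoint Q f m z / ((1 / Fintype.card M : ℝ) * outputMarginal Q z)) ≤
      (∑ m, ∑ z, hashedJoint Q f m z ^ (1 + s) /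
        ((1 / Fintype.card M : ℝ) * outputMarginal Q z) ^ s - 1) / s := by
  have := Real.sum_mul_log_div_le (p := fun x : M × Z => hashedJoint Q f x.1 x.2)
    (r := fun x => (1 / Fintype.card M : ℝ) * outputMarginal Q x.2)
    (fun x => mul_nonneg (by positivity) (sum_nonneg fun ℓ _ => (hQpos ℓ x.2).le))
    (fun x => mul_pos (by positivity) (outputMarginal_pos hQpos x.2))
    (by rw [Fintype.sum_prod_type]; exact sum_hashedJoint hQsum f) hs
  simpa only [Fintype.sum_prod_type] using this

lemma IsTwoUniversal.avg_sum_hashedJoint_rpow_div_le [Fintype M] [Nonempty L] [Nonempty M]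
    {F : Finset (L → M)} (hF : IsTwoUniversal F) (hFne : F.Nonempty) {Q : L → Z → ℝ}
    (hQ : ∀ ℓ z, 0 < Q ℓ z) (z : Z) {s : ℝ} (hs0 : 0 < s) (hs1 : s < 1) :
    (1 / #F : ℝ) * ∑ f ∈ F, ∑ m, hashedJoint Q f m z ^ (1 + s) /
        ((1 / Fintype.card M : ℝ) * outputMarginal Q z) ^ s ≤
      outputMarginal Q z + ((Fintype.card M : ℝ) / Fintype.card L) ^ s *
        ((1 / Fintype.card L : ℝ) * ∑ ℓ, Q ℓ z ^ (1 / (1 - s))) ^ (1 - s) := by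
  set n : ℝ := (Fintype.card L : ℝ)
  set k : ℝ := (Fintype.card M : ℝ)
  set t := outputMarginal Q z
  set G := (1 / n * ∑ ℓ, Q ℓ z ^ (1 / (1 - s))) ^ (1 - s)
  have hn : 0 < n := by positivity
  have hk : 0 < k := by positivity
  have ht : 0 < t := outputMarginal_pos hQ z
  have ha : ∀ ℓ, 0 ≤ 1 / n * Q ℓ z := fun ℓ => mul_nonneg (by positivity) (hQ ℓ z).le
  have hcollision : 1 / #F * ∑ f ∈ F, ∑ m, hashedJoint Q f m z ^ (1 + s) ≤
      ∑ ℓ, (1 / n * Q ℓ z) ^ (1 + s) + t ^ (1 + s) / k ^ s := by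
    have := hF.avg_sum_fiber_rpow_one_add_le hFne ha hs0.le hs1.le
    simp only [← mul_sum] at this
    exact this
  have hholder : ∑ ℓ, (1 / n * Q ℓ z) ^ (1 + s) ≤ (1 / n) ^ s * (t ^ s * G) :=
    calc ∑ ℓ, (1 / n * Q ℓ z) ^ (1 + s) = (1 / n) ^ s * ∑ ℓ, 1 / n * Q ℓ z ^ (1 + s) := by
          simp only [mul_sum, Real.mul_rpow (by positivity : (0 : ℝ) ≤ 1 / n) (hQ _ z).le,
            Real.rpow_one_add' (by positivity : (0 : ℝ) ≤ 1 / n) (by linarith : 1 + s ≠ 0)]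
          exact sum_congr rfl fun _ _ => by ring
      _ ≤ (1 / n) ^ s * ((∑ ℓ, 1 / n * Q ℓ z) ^ s *
            (∑ ℓ, 1 / n * Q ℓ z ^ (1 / (1 - s))) ^ (1 - s)) :=
          mul_le_mul_of_nonneg_left (Real.sum_mul_rpow_one_add_le (fun _ => by positivity)
            (fun ℓ => (hQ ℓ z).le) hs0.le hs1) (by positivity)
      _ = (1 / n) ^ s * (t ^ s * G) := by rw [← mul_sum, ← mul_sum]; rfl
  calc 1 / #F * ∑ f ∈ F, ∑ m, hashedJoint Q f m z ^ (1 + s) / (1 / k * t) ^ s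
      = (1 / #F * ∑ f ∈ F, ∑ m, hashedJoint Q f m z ^ (1 + s)) / (1 / k * t) ^ s := by
        simp only [← sum_div, mul_div_assoc]
    _ ≤ ((1 / n) ^ s * (t ^ s * G) + t ^ (1 + s) / k ^ s) / (1 / k * t) ^ s := by
        gcongr
        exact hcollision.trans (by gcongr)
    _ = t + (k / n) ^ s * G := by
        rw [Real.mul_rpow (by positivity) ht.le, Real.rpow_one_add' ht.le (by linarith),
          Real.div_rpow zero_le_one hn.le, Real.div_rpow zero_le_one hk.le,
          Real.div_rpow hk.le hn.le, Real.one_rpow]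
        have := Real.rpow_pos_of_pos hn s
        have := Real.rpow_pos_of_pos hk s
        have := Real.rpow_pos_of_pos ht s
        field_simp
        ring

end HashedChannel

theorem privacy_amplification_gallager_general
    {L M Z : Type*} [Fintype L] [Fintype M] [Fintype Z]
    [Nonempty L] [Nonempty M] [DecidableEq M]
    (F : Finset (L → M)) (hF : F.Nonempty)
    (huniv : ∀ x₁ x₂ : L, x₁ ≠ x₂ →
      ((F.filter (fun f => f x₁ = f x₂)).card : ℝ) / F.card ≤ 1 / Fintype.card M)
    (Q : L → Z → ℝ) (hQpos : ∀ ℓ z, 0 < Q ℓ z) (hQsum : ∀ ℓ, ∑ z : Z, Q ℓ z = 1)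
    (QZ : Z → ℝ) (hQZ : ∀ z, QZ z = (1 / Fintype.card L : ℝ) * ∑ ℓ : L, Q ℓ z)
    -- joint distribution of (f(L), Z) for a fixed hash function f
    (joint : (L → M) → M → Z → ℝ)
    (hjoint : ∀ f m z, joint f m z =
      (1 / Fintype.card L : ℝ) * ∑ ℓ ∈ univ.filter (fun ℓ : L => f ℓ = m), Q ℓ z)
    -- mutual information I(f(L); Z) for a fixed hash function f
    (MI : (L → M) → ℝ)
    (hMI : ∀ f, MI f = ∑ m : M, ∑ z : Z,
      joint f m z * Real.log (joint f m z / ((1 / Fintype.card M : ℝ) * QZ z)))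
    (s : ℝ) (hs0 : 0 < s) (hs1 : s ≤ 1 / 2) :
    (1 / F.card : ℝ) * ∑ f ∈ F, MI f ≤
      (Fintype.card M : ℝ) ^ s / ((Fintype.card L : ℝ) ^ s * s) *
        Real.exp (Real.log (∑ z : Z,
          ((1 / Fintype.card L : ℝ) *
              ∑ ℓ : L, Q ℓ z ^ ((1 : ℝ) / (1 - s))) ^ (1 - s))) := by
  obtain rfl : QZ = outputMarginal Q := funext hQZ
  obtain rfl : joint = hashedJoint Q := funext fun f => funext fun m => funext (hjoint f m)
  set r := fun z => (1 / Fintype.card M : ℝ) * outputMarginal Q z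
  set G := fun z => ((1 / Fintype.card L : ℝ) * ∑ ℓ, Q ℓ z ^ ((1 : ℝ) / (1 - s))) ^ (1 - s)
  have hF0 : (0 : ℝ) < #F := by exact_mod_cast hF.card_pos
  calc (1 / #F : ℝ) * ∑ f ∈ F, MI f
      ≤ (1 / #F : ℝ) * ∑ f ∈ F,
          (∑ m, ∑ z, hashedJoint Q f m z ^ (1 + s) / r z ^ s - 1) / s := by
        gcongr with f
        exact (hMI f).trans_le (sum_hashedJoint_mul_log_le hQpos hQsum f hs0)
    _ = (∑ z, (1 / #F : ℝ) * ∑ f ∈ F, ∑ m, hashedJoint Q f m z ^ (1 + s) / r z ^ s - 1) /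
          s := by
        rw [← sum_div, sum_sub_distrib, sum_const, nsmul_eq_mul, mul_one, mul_div_assoc',
          mul_sub, one_div_mul_cancel hF0.ne']
        simp only [mul_sum]
        rw [(sum_congr rfl fun f _ => sum_comm).trans sum_comm]
    _ ≤ (∑ z, (outputMarginal Q z + ((Fintype.card M : ℝ) / Fintype.card L) ^ s * G z) - 1) /
          s := by
        gcongr with z
        exact IsTwoUniversal.avg_sum_hashedJoint_rpow_div_le huniv hF hQpos z hs0
          (by linarith)
    _ = (Fintype.card M : ℝ) ^ s / ((Fintype.card L : ℝ) ^ s * s) * ∑ z, G z := by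
        rw [sum_add_distrib, sum_outputMarginal hQsum, ← mul_sum,
          Real.div_rpow (by positivity) (by positivity)]
        field_simp
        ring
    _ ≤ _ := by gcongr; exact Real.le_exp_log _

/-- Theorem 1 (new privacy amplification theorem): the conditional mutual
information E_F I(F(L); Z) is bounded by (|M|^s/(|L|^s s)) exp(φ̄(s,Q)). -/
theorem privacy_amplification_gallager
    {L M Z : Type*} [Fintype L] [Fintype M] [Fintype Z]
    [Nonempty L] [Nonempty M] [Nonempty Z] [DecidableEq L] [DecidableEq M]
    (F : Finset (L → M)) (hF : F.Nonempty)
    (huniv : ∀ x₁ x₂ : L, x₁ ≠ x₂ →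
      ((F.filter (fun f => f x₁ = f x₂)).card : ℝ) / F.card ≤ 1 / Fintype.card M)
    (hreg : ∀ f ∈ F, ∀ m : M,
      (univ.filter (fun ℓ : L => f ℓ = m)).card * Fintype.card M = Fintype.card L)
    (Q : L → Z → ℝ) (hQpos : ∀ ℓ z, 0 < Q ℓ z) (hQsum : ∀ ℓ, ∑ z : Z, Q ℓ z = 1)
    (QZ : Z → ℝ) (hQZ : ∀ z, QZ z = (1 / Fintype.card L : ℝ) * ∑ ℓ : L, Q ℓ z)
    -- joint distribution of (f(L), Z) for a fixed hash function f
    (joint : (L → M) → M → Z → ℝ)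
    (hjoint : ∀ f m z, joint f m z =
      (1 / Fintype.card L : ℝ) * ∑ ℓ ∈ univ.filter (fun ℓ : L => f ℓ = m), Q ℓ z)
    -- mutual information I(f(L); Z) for a fixed hash function f
    (MI : (L → M) → ℝ)
    (hMI : ∀ f, MI f = ∑ m : M, ∑ z : Z,
      joint f m z * Real.log (joint f m z / ((1 / Fintype.card M : ℝ) * QZ z)))
    (s : ℝ) (hs0 : 0 < s) (hs1 : s ≤ 1 / 2) :
    (1 / F.card : ℝ) * ∑ f ∈ F, MI f ≤
      (Fintype.card M : ℝ) ^ s / ((Fintype.card L : ℝ) ^ s * s) *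
        Real.exp (Real.log (∑ z : Z,
          ((1 / Fintype.card L : ℝ) *
              ∑ ℓ : L, Q ℓ z ^ ((1 : ℝ) / (1 - s))) ^ (1 - s))) :=
  privacy_amplification_gallager_general F hF huniv Q hQpos hQsum QZ hQZ joint hjoint MI hMI s hs0
    hs1
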